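/- Let μ be a probability measure on [0,1] and let (v_k)_{k≥1} be a (finite or infinite) sequence of points in [0,1]. Then there exists a sequence (x_k)_{k≥1} in [0,1] such that for every N ≥ 2 (with N at most the length of the sequence in the finite case), the empirical measures satisfy D*_N(μ; (1/N)Σ_{i=1}^N δ_{x_i}) ≤ D*_N(λ; (1/N)Σ_{i=1}^N δ_{v_i}), where λ is Lebesgue measure on [0,1]. -/

import Mathlib

/-!
Take `x_k = Q (v_k)` with `Q` the quantile function of `μ`. For `b ∈ [0,1]` and
`c = μ [0,b)` one has `v < c → Q v < b → v ≤ c`, so the proportion of the `x_k` in `[0,b)` lies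
between the proportions of the `v_k` in `[0,c)` and in `[0,c]`. As `λ [0,c) = λ [0,c] = c`, the
error at `b` is bounded by the Lebesgue discrepancy of `(v_k)` at `c`; the closed interval `[0,c]`
is reached as a right limit of half-open ones.
-/

open MeasureTheory Set
open scoped ENNReal

/-- The empirical measure `ν_N = (1/N) ∑_{i=1}^N δ_{x_i}` of the first `N` terms of a
sequence in `[0,1] ⊆ ℝ`. -/
noncomputable def emp1 (N : ℕ) (x : ℕ → ℝ) : Measure ℝ :=
  (N : ℝ≥0∞)⁻¹ • ∑ i ∈ Finset.range N, Measure.dirac (x i)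

/-- The one-dimensional star-discrepancy
`D*(μ;ν) = sup_{0 ≤ b ≤ 1} |μ([0,b)) − ν([0,b))|`. -/
noncomputable def starDisc (μ ν : Measure ℝ) : ℝ :=
  ⨆ b : Icc (0 : ℝ) 1, |(μ (Ico 0 ↑b)).toReal - (ν (Ico 0 ↑b)).toReal|

open Filter Topology ProbabilityTheory

section EmpiricalMeasure

variable {N : ℕ} {x y : ℕ → ℝ} {s t : Set ℝ}

theorem emp1_apply_le_emp1_apply (h : ∀ i < N, x i ∈ s → y i ∈ t) :
    emp1 N x s ≤ emp1 N y t := by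
  simp only [emp1, Measure.smul_apply, Measure.finsetSum_apply, Measure.dirac_apply, smul_eq_mul]
  gcongr with i hi
  by_cases hx : x i ∈ s
  · simp [hx, h i (Finset.mem_range.1 hi) hx]
  · simp [hx]

theorem emp1_apply_eq_one (hN : N ≠ 0) (hx : ∀ i, x i ∈ s) : emp1 N x s = 1 := by
  simp [emp1, Measure.dirac_apply_of_mem (hx _), ENNReal.inv_mul_cancel, hN]

theorem isProbabilityMeasure_emp1 (hN : N ≠ 0) : IsProbabilityMeasure (emp1 N x) :=
  ⟨emp1_apply_eq_one hN fun _ ↦ mem_univ _⟩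

end EmpiricalMeasure

section StarDiscrepancy

variable {α β : Measure ℝ} [IsFiniteMeasure α] [IsFiniteMeasure β]

theorem abs_sub_measureReal_Ico_le_starDisc {b : ℝ} (hb : b ∈ Icc 0 1) :
    |α.real (Ico 0 b) - β.real (Ico 0 b)| ≤ starDisc α β := by
  refine le_ciSup (f := fun b : Icc (0 : ℝ) 1 ↦ |α.real (Ico 0 b) - β.real (Ico 0 b)|)
    ⟨α.real univ + β.real univ, ?_⟩ ⟨b, hb⟩
  rintro _ ⟨b, rfl⟩
  have hα := measureReal_mono (μ := α) (subset_univ (Ico 0 (b : ℝ)))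
  have hβ := measureReal_mono (μ := β) (subset_univ (Ico 0 (b : ℝ)))
  rw [abs_le]
  constructor <;> linarith [measureReal_nonneg (μ := α) (s := Ico 0 (b : ℝ)),
    measureReal_nonneg (μ := β) (s := Ico 0 (b : ℝ))]

theorem starDisc_nonneg : 0 ≤ starDisc α β :=
  (abs_nonneg _).trans (abs_sub_measureReal_Ico_le_starDisc (α := α) (β := β) (b := 0) (by simp))

theorem tendsto_measureReal_Ico_nhdsGT (μ : Measure ℝ) [IsFiniteMeasure μ] (c : ℝ) :
    Tendsto (fun b ↦ μ.real (Ico 0 b)) (𝓝[>] c) (𝓝 (μ.real (Icc 0 c))) := by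
  have h := tendsto_measure_biInter_gt (μ := μ) (s := fun b ↦ Ico (0 : ℝ) b) (a := c)
    (fun _ _ ↦ measurableSet_Ico.nullMeasurableSet)
    (fun _ _ _ hij ↦ Ico_subset_Ico_right hij) ⟨c + 1, by linarith, measure_ne_top _ _⟩
  have hInter : ⋂ r > c, Ico (0 : ℝ) r = Icc 0 c := by
    ext y
    simp only [mem_iInter, mem_Ico, mem_Icc]
    exact ⟨fun h ↦ ⟨(h (c + 1) (by linarith)).1, le_of_forall_gt fun r hr ↦ (h r hr).2⟩,
      fun h r hr ↦ ⟨h.1, h.2.trans_lt hr⟩⟩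
  rw [hInter] at h
  exact (ENNReal.tendsto_toReal (measure_ne_top _ _)).comp h

theorem abs_sub_measureReal_Icc_le_starDisc
    (hunit : α.real (Icc 0 1) = β.real (Icc 0 1)) {c : ℝ} (hc : c ∈ Icc 0 1) :
    |α.real (Icc 0 c) - β.real (Icc 0 c)| ≤ starDisc α β := by
  rcases hc.2.eq_or_lt with rfl | hc1
  · simpa [hunit] using starDisc_nonneg
  refine le_of_tendsto (((tendsto_measureReal_Ico_nhdsGT α c).sub
    (tendsto_measureReal_Ico_nhdsGT β c)).abs) ?_
  filter_upwards [Ioo_mem_nhdsGT hc1] with b hb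
  exact abs_sub_measureReal_Ico_le_starDisc ⟨hc.1.trans hb.1.le, hb.2.le⟩

end StarDiscrepancy

theorem volume_restrict_unitInterval_real_Ico {c : ℝ} (hc : c ∈ Icc 0 1) :
    (volume.restrict (Icc (0 : ℝ) 1)).real (Ico 0 c) = c := by
  rw [measureReal_restrict_apply measurableSet_Ico,
    inter_eq_left.2 (Ico_subset_Icc_self.trans (Icc_subset_Icc_right hc.2)),
    Real.volume_real_Ico_of_le hc.1, sub_zero]

theorem volume_restrict_unitInterval_real_Icc {c : ℝ} (hc : c ∈ Icc 0 1) :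
    (volume.restrict (Icc (0 : ℝ) 1)).real (Icc 0 c) = c := by
  rw [measureReal_restrict_apply measurableSet_Icc,
    inter_eq_left.2 (Icc_subset_Icc_right hc.2), Real.volume_real_Icc_of_le hc.1, sub_zero]

section Quantile

variable (μ : Measure ℝ)

/-- Taking the infimum over `[0,1]` keeps the quantile in `[0,1]` for every `u`, also for `u > 1`,
where the set is empty and `sInf ∅ = 0`. -/
noncomputable def quantile (u : ℝ) : ℝ :=
  sInf {t ∈ Icc (0 : ℝ) 1 | u ≤ cdf μ t}

variable {μ}

theorem quantile_mem_Icc (u : ℝ) : quantile μ u ∈ Icc 0 1 := by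
  refine ⟨Real.sInf_nonneg fun t ht ↦ ht.1.1, ?_⟩
  rcases eq_empty_or_nonempty {t ∈ Icc (0 : ℝ) 1 | u ≤ cdf μ t} with h | ⟨t, ht⟩
  · rw [quantile, h, Real.sInf_empty]
    exact zero_le_one
  · exact (csInf_le ⟨0, fun t ht ↦ ht.1.1⟩ ht).trans ht.1.2

theorem quantile_le {u t : ℝ} (ht : t ∈ Icc 0 1) (hu : u ≤ cdf μ t) : quantile μ u ≤ t :=
  csInf_le ⟨0, fun _ hs ↦ hs.1.1⟩ ⟨ht, hu⟩

/-- Right-continuity of `cdf μ` puts the infimum itself in the set. -/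
theorem le_cdf_quantile {u : ℝ} (hu : u ≤ cdf μ 1) : u ≤ cdf μ (quantile μ u) := by
  have hgt : ∀ t > quantile μ u, u ≤ cdf μ t := fun t ht ↦ by
    obtain ⟨s, hs, hst⟩ :=
      exists_lt_of_csInf_lt (s := {t ∈ Icc (0 : ℝ) 1 | u ≤ cdf μ t}) ⟨1, by simp, hu⟩ ht
    exact hs.2.trans (monotone_cdf μ hst.le)
  exact ge_of_tendsto (((cdf μ).right_continuous _).mono Ioi_subset_Ici_self)
    (eventually_nhdsWithin_of_forall hgt)

theorem measure_Iio_zero_eq_zero (hμ : μ (Icc 0 1)ᶜ = 0) : μ (Iio 0) = 0 :=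
  measure_mono_null (fun _ ht hmem ↦ not_le.2 (mem_Iio.1 ht) (mem_Icc.1 hmem).1) hμ

theorem measureReal_Ico_zero_eq_measureReal_Iio (hμ : μ (Icc 0 1)ᶜ = 0) (b : ℝ) :
    μ.real (Ico 0 b) = μ.real (Iio b) := by
  have hdiff : Iio b \ Iio 0 = Ico 0 b := by
    ext y
    simp [and_comm]
  rw [← hdiff, measureReal_def, measure_sdiff_null (measure_Iio_zero_eq_zero hμ), measureReal_def]

variable [IsProbabilityMeasure μ]

theorem le_measureReal_Iio_of_quantile_lt {u b : ℝ} (hu : u ≤ cdf μ 1)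
    (h : quantile μ u < b) : u ≤ μ.real (Iio b) :=
  (le_cdf_quantile hu).trans <| (cdf_eq_real μ _).trans_le <|
    measureReal_mono (Iic_subset_Iio.2 h)

theorem measureReal_Iio_eq_leftLim_cdf (b : ℝ) :
    μ.real (Iio b) = Function.leftLim (cdf μ) b := by
  have h := (cdf μ).measure_Iio (tendsto_cdf_atBot μ) b
  rw [measure_cdf, sub_zero] at h
  rw [measureReal_def, h, ENNReal.toReal_ofReal]
  exact (cdf_nonneg μ _).trans ((monotone_cdf μ).le_leftLim (sub_one_lt b))

variable (hμ : μ (Icc 0 1)ᶜ = 0)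
include hμ

theorem cdf_one_eq_one : cdf μ 1 = 1 := by
  rw [cdf_eq_real, measureReal_def, (prob_compl_eq_zero_iff measurableSet_Iic).1
    (measure_mono_null (compl_subset_compl.2 Icc_subset_Iic_self) hμ), ENNReal.toReal_one]

theorem cdf_eq_zero_of_neg {t : ℝ} (ht : t < 0) : cdf μ t = 0 := by
  rw [cdf_eq_real, measureReal_def,
    measure_mono_null (Iic_subset_Iio.2 ht) (measure_Iio_zero_eq_zero hμ), ENNReal.toReal_zero]

theorem quantile_lt_of_lt_measureReal_Iio {u b : ℝ} (hu : 0 ≤ u) (hb : b ≤ 1)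
    (h : u < μ.real (Iio b)) : quantile μ u < b := by
  rw [measureReal_Iio_eq_leftLim_cdf] at h
  obtain ⟨t, hut, htb⟩ := ((((monotone_cdf μ).tendsto_leftLim b).eventually_const_lt h).and
    self_mem_nhdsWithin).exists
  have ht0 : 0 ≤ t := not_lt.1 fun ht ↦ by linarith [cdf_eq_zero_of_neg hμ ht]
  exact (quantile_le ⟨ht0, htb.le.trans hb⟩ hut.le).trans_lt htb

end Quantile

theorem abs_sub_le_starDisc_volume_of_mem_Icc {ν : Measure ℝ} [IsProbabilityMeasure ν]
    (hν : ν (Icc 0 1) = 1) {c y : ℝ} (hc : c ∈ Icc 0 1) (hlower : ν.real (Ico 0 c) ≤ y)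
    (hupper : y ≤ ν.real (Icc 0 c)) : |c - y| ≤ starDisc (volume.restrict (Icc 0 1)) ν := by
  have hIco := abs_sub_measureReal_Ico_le_starDisc (α := volume.restrict (Icc 0 1)) (β := ν) hc
  have hIcc := abs_sub_measureReal_Icc_le_starDisc (α := volume.restrict (Icc 0 1)) (β := ν)
    (by rw [volume_restrict_unitInterval_real_Icc ⟨zero_le_one, le_rfl⟩, measureReal_def, hν,
      ENNReal.toReal_one]) hc
  rw [volume_restrict_unitInterval_real_Ico hc, abs_sub_le_iff] at hIco
  rw [volume_restrict_unitInterval_real_Icc hc, abs_sub_le_iff] at hIcc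
  rw [abs_sub_le_iff]
  constructor <;> linarith

/-- Let `μ` be a probability measure on `[0,1]` and `(v_k)` a sequence of points of
`[0,1]`. Then there is a sequence `(x_k)` in `[0,1]` such that for every `N ≥ 2` the
star-discrepancy of `(x_k)` with respect to `μ` is at most the Lebesgue star-discrepancy
of `(v_k)`. -/
theorem stmt10 (μ : Measure ℝ) [IsProbabilityMeasure μ]
    (hμ : μ ((Icc (0 : ℝ) 1)ᶜ) = 0)
    (v : ℕ → ℝ) (hv : ∀ k, v k ∈ Icc (0 : ℝ) 1) :
    ∃ x : ℕ → ℝ, (∀ k, x k ∈ Icc (0 : ℝ) 1) ∧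
      ∀ N : ℕ, 2 ≤ N →
        starDisc μ (emp1 N x) ≤
          starDisc (volume.restrict (Icc (0 : ℝ) 1)) (emp1 N v) := by
  refine ⟨fun k ↦ quantile μ (v k), fun k ↦ quantile_mem_Icc _, fun N hN ↦ ?_⟩
  have hN0 : N ≠ 0 := by omega
  have := isProbabilityMeasure_emp1 (x := v) hN0
  have := isProbabilityMeasure_emp1 (x := fun k ↦ quantile μ (v k)) hN0
  refine ciSup_le fun ⟨b, hb⟩ ↦ ?_
  have hc : μ.real (Iio b) ∈ Icc 0 1 := ⟨measureReal_nonneg, measureReal_le_one⟩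
  rw [← measureReal_def, ← measureReal_def, measureReal_Ico_zero_eq_measureReal_Iio hμ]
  refine abs_sub_le_starDisc_volume_of_mem_Icc (emp1_apply_eq_one hN0 hv) hc
    (ENNReal.toReal_mono (measure_ne_top _ _) (emp1_apply_le_emp1_apply fun i _ hi ↦ ?_))
    (ENNReal.toReal_mono (measure_ne_top _ _) (emp1_apply_le_emp1_apply fun i _ hi ↦ ?_))
  · exact ⟨(quantile_mem_Icc _).1, quantile_lt_of_lt_measureReal_Iio hμ hi.1 hb.2 hi.2⟩
  · exact ⟨(hv i).1,
      le_measureReal_Iio_of_quantile_lt ((hv i).2.trans_eq (cdf_one_eq_one hμ).symm) hi.2⟩
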